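/- Let 0 < p, q < ∞, α > 0, and suppose X is a quasi-normed space of holomorphic functions on 𝔻 continuously containing the functions f_R(z) = (1-Rz)^{-(m+1)} for R ∈ [0,1), with ‖f_R‖_X ≤ C(1-R)^{-(m-α-1/p+1)} for some m > α - 1 + 1/p - 1. If {c_k} is a coefficient multiplier from X into the weighted Hardy growth space A^{t,∞}_β (i.e. ‖M_c f‖ = sup_r M_t(M_c f, r)(1-r)^β ≤ C'‖f‖_X for all f ∈ X), then the function g(z) = Σ c_k z^k satisfies sup_{0≤r<1} M_t(D^m g, r)(1-r)^{m+1-1/p+β-α} < ∞. -/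

import Mathlib

open MeasureTheory Real Complex

/-- The integral mean `M_t(f,r)` on the circle of radius `r`. -/
noncomputable def circMean (t : ℝ) (f : ℂ → ℂ) (r : ℝ) : ℝ :=
  ((1 / (2 * π)) *
    ∫ θ in (0:ℝ)..(2 * π), ‖f (r * Complex.exp (θ * Complex.I))‖ ^ t) ^ (1 / t)

/-- Fractional derivative of order `m` of the power series with coefficients `c`. -/
noncomputable def fracDeriv (m : ℝ) (c : ℕ → ℂ) (z : ℂ) : ℂ :=
  ∑' k : ℕ, ((Real.Gamma (k + m + 1) / (Real.Gamma (m + 1) * Real.Gamma (k + 1)) : ℝ) : ℂ)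
    * c k * z ^ k

lemma binom_slit {w : ℂ} (hw : ‖w‖ < 1) : (1 - w) ∈ Complex.slitPlane := by
  rw [Complex.mem_slitPlane_iff]
  left
  have : |w.re| ≤ ‖w‖ := Complex.abs_re_le_norm w
  simp only [Complex.sub_re, Complex.one_re]
  cases abs_le.mp this; linarith

lemma binom_hasDeriv (s : ℂ) {w : ℂ} (hw : ‖w‖ < 1) :
    HasDerivAt (fun z : ℂ => (1 - z) ^ (-s)) (s * (1 - w) ^ (-s - 1)) w := by
  have h : HasDerivAt (fun z : ℂ => 1 - z) (-1) w := by
    simpa using (hasDerivAt_id w).const_sub 1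
  have := h.cpow_const (c := -s) (binom_slit hw)
  convert this using 1
  ring

lemma binom_diffOn (s : ℂ) :
    DifferentiableOn ℂ (fun z : ℂ => (1 - z) ^ (-s)) (Metric.ball (0:ℂ) 1) := by
  intro w hw
  rw [Metric.mem_ball, dist_zero_right] at hw
  exact (binom_hasDeriv s hw).differentiableAt.differentiableWithinAt

lemma binom_iter (s : ℂ) (n : ℕ) : ∀ w ∈ Metric.ball (0:ℂ) 1,
    iteratedDeriv n (fun z : ℂ => (1 - z) ^ (-s)) w
      = (∏ i ∈ Finset.range n, (s + i)) * (1 - w) ^ (-s - n) := by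
  induction n with
  | zero => intro w _; simp
  | succ n ih =>
    intro w hw
    rw [iteratedDeriv_succ]
    have hEq : iteratedDeriv n (fun z : ℂ => (1 - z) ^ (-s))
        =ᶠ[nhds w] fun z => (∏ i ∈ Finset.range n, (s + i)) * (1 - z) ^ (-s - n) := by
      filter_upwards [Metric.isOpen_ball.mem_nhds hw] with z hz using ih z hz
    rw [hEq.deriv_eq]
    rw [Metric.mem_ball, dist_zero_right] at hw
    have hd : HasDerivAt (fun z : ℂ => (1 - z) ^ (-(s + n)))
        ((s + n) * (1 - w) ^ (-(s + n) - 1)) w := binom_hasDeriv (s + n) hw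
    have hd' : HasDerivAt (fun z : ℂ => (∏ i ∈ Finset.range n, (s + i)) * (1 - z) ^ (-s - n))
        ((∏ i ∈ Finset.range n, (s + i)) * ((s + n) * (1 - w) ^ (-(s + n) - 1))) w := by
      have : (fun z : ℂ => (∏ i ∈ Finset.range n, (s + i)) * (1 - z) ^ (-s - n))
          = fun z : ℂ => (∏ i ∈ Finset.range n, (s + i)) * (1 - z) ^ (-(s + n)) := by
        funext z; congr 2; ring
      rw [this]
      exact hd.const_mul _
    rw [hd'.deriv, Finset.prod_range_succ]
    have : (-(s + n) - 1 : ℂ) = -s - (n + 1 : ℕ) := by push_cast; ring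
    rw [this]
    ring

lemma gamma_prod {s : ℝ} (hs : Real.Gamma s ≠ 0) (n : ℕ) :
    Real.Gamma (s + n) = (∏ i ∈ Finset.range n, (s + i)) * Real.Gamma s := by
  induction n with
  | zero => simp
  | succ n ih =>
    have hne : s + n ≠ 0 := by
      intro h
      exact hs ((Real.Gamma_eq_zero_iff s).mpr ⟨n, by linarith⟩)
    have : s + (n + 1 : ℕ) = (s + n) + 1 := by push_cast; ring
    rw [this, Real.Gamma_add_one hne, ih, Finset.prod_range_succ]
    ring

lemma binom_hasSum {s : ℝ} (hs : Real.Gamma s ≠ 0) {w : ℂ} (hw : ‖w‖ < 1) :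
    HasSum (fun k : ℕ =>
        ((Real.Gamma (k + s) / (Real.Gamma s * Real.Gamma (k + 1)) : ℝ) : ℂ) * w ^ k)
      ((1 - w) ^ (-(s:ℂ))) := by
  have hwb : w ∈ Metric.ball (0:ℂ) 1 := by
    rw [Metric.mem_ball, dist_zero_right]; exact hw
  have H := Complex.hasSum_taylorSeries_on_ball (binom_diffOn (s:ℂ)) hwb
  convert H using 2 with n
  · rfl
  rw [binom_iter (s:ℂ) n 0 (by simp)]
  simp only [sub_zero, one_cpow, mul_one]
  have h1 : Real.Gamma (n + s) / (Real.Gamma s * Real.Gamma (n + 1))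
      = (∏ i ∈ Finset.range n, (s + i)) / (n.factorial : ℝ) := by
    rw [show (n:ℝ) + s = s + n by ring, gamma_prod hs n, Real.Gamma_nat_eq_factorial]
    field_simp
  rw [h1]
  push_cast
  rw [smul_eq_mul, smul_eq_mul]
  ring

lemma circMean_nonneg (t : ℝ) (f : ℂ → ℂ) (r : ℝ) : 0 ≤ circMean t f r := by
  unfold circMean
  apply Real.rpow_nonneg
  apply mul_nonneg (by positivity)
  apply intervalIntegral.integral_nonneg (by positivity)
  intro θ _
  positivity


theorem stmt12 (p q α t β m C C' : ℝ)
    (hp : 0 < p) (hq : 0 < q) (hα : 0 < α) (ht : 0 < t)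
    (hm : m > α - 1 + 1 / p - 1) (hC : 0 < C) (hC' : 0 < C')
    (X : Set (ℂ → ℂ)) (N : (ℂ → ℂ) → ℝ) (c : ℕ → ℂ)
    -- `X` contains the test functions `f_R` with the stated norm bound:
    (htest : ∀ R : ℝ, R ∈ Set.Ico (0:ℝ) 1 →
      (fun z : ℂ => (1 - (R:ℂ) * z) ^ (-(m + 1) : ℂ)) ∈ X ∧
        N (fun z : ℂ => (1 - (R:ℂ) * z) ^ (-(m + 1) : ℂ)) ≤ C * (1 - R) ^ (-(m - α - 1 / p + 1)))
    -- `{c_k}` multiplies `X` into the growth space `A^{t,∞}_β`: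
    (hmult : ∀ f ∈ X, ∀ a : ℕ → ℂ,
      (∀ z ∈ Metric.ball (0:ℂ) 1, HasSum (fun k : ℕ => a k * z ^ k) (f z)) →
      ∀ r : ℝ, r ∈ Set.Ico (0:ℝ) 1 →
        circMean t (fun z => ∑' k : ℕ, c k * a k * z ^ k) r * (1 - r) ^ β ≤ C' * N f) :
    ∃ B : ℝ, ∀ r : ℝ, r ∈ Set.Ico (0:ℝ) 1 →
      circMean t (fracDeriv m c) r * (1 - r) ^ (m + 1 - 1 / p + β - α) ≤ B := by
  set e : ℝ := m - α - 1 / p + 1 with he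
  refine ⟨C' * C * (2:ℝ) ^ |e + β|, ?_⟩
  intro ρ hρ
  obtain ⟨hρ0, hρ1⟩ := hρ
  have hB0 : (0:ℝ) ≤ C' * C * (2:ℝ) ^ |e + β| := by positivity
  by_cases hΓ : Real.Gamma (m + 1) = 0
  · have hf : fracDeriv m c = fun _ => (0:ℂ) := by
      funext z
      unfold fracDeriv
      simp [hΓ]
    have hz : circMean t (fracDeriv m c) ρ = 0 := by
      rw [hf]
      unfold circMean
      simp [Real.zero_rpow ht.ne']
      exact Real.zero_rpow (inv_ne_zero ht.ne')
    rw [hz, zero_mul]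
    exact hB0
  · set s : ℝ := Real.sqrt ρ with hsdef
    have hs0 : 0 ≤ s := Real.sqrt_nonneg ρ
    have hss : s * s = ρ := Real.mul_self_sqrt hρ0
    have hs1 : s < 1 := by nlinarith
    have h1s : (0:ℝ) < 1 - s := by linarith
    have h1ps : (0:ℝ) ≤ 1 + s := by linarith
    obtain ⟨hmem, hN⟩ := htest s ⟨hs0, hs1⟩
    set a : ℕ → ℂ := fun k =>
      ((Real.Gamma (k + m + 1) / (Real.Gamma (m + 1) * Real.Gamma (k + 1)) : ℝ) : ℂ)
        * (s:ℂ) ^ k with hadef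
    have hsum : ∀ z ∈ Metric.ball (0:ℂ) 1,
        HasSum (fun k : ℕ => a k * z ^ k) ((1 - (s:ℂ) * z) ^ (-(m + 1) : ℂ)) := by
      intro z hz
      rw [Metric.mem_ball, dist_zero_right] at hz
      have hz1 : ‖(s:ℂ) * z‖ < 1 := by
        rw [norm_mul, Complex.norm_real, Real.norm_eq_abs, _root_.abs_of_nonneg hs0]
        nlinarith [norm_nonneg z]
      have hb := binom_hasSum (s := m + 1) hΓ hz1
      have hfe : (fun k : ℕ => a k * z ^ k) = fun k : ℕ =>
          ((Real.Gamma (k + (m + 1)) / (Real.Gamma (m + 1) * Real.Gamma (k + 1)) : ℝ) : ℂ)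
            * ((s:ℂ) * z) ^ k := by
        funext k
        rw [hadef]
        simp only [add_assoc]
        rw [mul_pow]
        ring
      rw [hfe]
      convert hb using 2
      push_cast
      ring
    have key := hmult _ hmem a hsum s ⟨hs0, hs1⟩
    have hfun : (fun z : ℂ => ∑' k : ℕ, c k * a k * z ^ k)
        = fun z : ℂ => fracDeriv m c ((s:ℂ) * z) := by
      funext z
      unfold fracDeriv
      apply tsum_congr
      intro k
      rw [hadef]
      simp only [mul_pow]
      ring
    have hcirc : circMean t (fun z : ℂ => fracDeriv m c ((s:ℂ) * z)) s
        = circMean t (fracDeriv m c) ρ := by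
      unfold circMean
      have harg : ∀ θ : ℝ, ((s:ℂ) * ((s:ℂ) * Complex.exp (θ * Complex.I)))
          = (ρ:ℂ) * Complex.exp (θ * Complex.I) := by
        intro θ; rw [← mul_assoc, ← Complex.ofReal_mul, hss]
      simp only [harg]
    rw [hfun, hcirc] at key
    have key2 : circMean t (fracDeriv m c) ρ * (1 - s) ^ β ≤ C' * C * (1 - s) ^ (-e) := by
      calc circMean t (fracDeriv m c) ρ * (1 - s) ^ β ≤ C' * N (fun z : ℂ => (1 - (s:ℂ) * z) ^ (-(m + 1) : ℂ)) := key
        _ ≤ C' * (C * (1 - s) ^ (-e)) := mul_le_mul_of_nonneg_left hN hC'.le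
        _ = C' * C * (1 - s) ^ (-e) := by ring
    have hCM : 0 ≤ circMean t (fracDeriv m c) ρ := circMean_nonneg t _ ρ
    have hpow : (1 + s) ^ (e + β) ≤ (2:ℝ) ^ |e + β| := by
      rcases le_or_gt 0 (e + β) with h | h
      · rw [_root_.abs_of_nonneg h]
        exact Real.rpow_le_rpow h1ps (by linarith) h
      · calc (1 + s) ^ (e + β) ≤ 1 :=
            Real.rpow_le_one_of_one_le_of_nonpos (by linarith) h.le
          _ ≤ (2:ℝ) ^ |e + β| := by
            have h20 : (2:ℝ) ^ (0:ℝ) ≤ (2:ℝ) ^ |e + β| :=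
              Real.rpow_le_rpow_of_exponent_le (by norm_num) (abs_nonneg _)
            rwa [Real.rpow_zero] at h20
    have hEe : m + 1 - 1 / p + β - α = e + β := by rw [he]; ring
    have h2 : ((1:ℝ) - s) ^ (-e) * (1 - s) ^ e = 1 := by
      rw [← Real.rpow_add h1s, neg_add_cancel, Real.rpow_zero]
    have h1ρ : (1:ℝ) - ρ = (1 - s) * (1 + s) := by rw [← hss]; ring
    calc circMean t (fracDeriv m c) ρ * (1 - ρ) ^ (m + 1 - 1 / p + β - α)
        = (circMean t (fracDeriv m c) ρ * (1 - s) ^ β) * ((1 - s) ^ e * (1 + s) ^ (e + β)) := by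
          rw [hEe, h1ρ, Real.mul_rpow h1s.le h1ps, show e + β = β + e from by ring,
            Real.rpow_add h1s β e]
          ring
      _ ≤ (C' * C * (1 - s) ^ (-e)) * ((1 - s) ^ e * (1 + s) ^ (e + β)) := by
          apply mul_le_mul_of_nonneg_right key2
          positivity
      _ = C' * C * (1 + s) ^ (e + β) := by
          linear_combination (C' * C * (1 + s) ^ (e + β)) * h2
      _ ≤ C' * C * (2:ℝ) ^ |e + β| := by
          apply mul_le_mul_of_nonneg_left hpow
          positivity
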